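/- arXiv:2602.22619 — 7 statements merged into one kernel-verified Lean document; each statement's English description precedes it below -/
import Mathlib

section
/- Let ρ ∈ (0,1) and R > 1, and let φ be holomorphic on the open disk of radius R with φ(0) = 0, φ(1) = 1, and |Im φ(z)| < ρ for all |z| < R. Then π/(2ρ) ≤ log((R+1)/(R−1)). -/
/-!
Rescale the strip to `|Im w| < π/4` by `t = π/(4ρ)`; there
`‖cosh w‖² - ‖sinh w‖² = cos (2 Im w) > 0`, so `f = tanh (t φ)` maps the disk of radius `R`
holomorphically into the unit disk with `f 0 = 0`. Schwarz's lemma at `z = 1` gives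
`tanh t = f 1 ≤ 1/R`, i.e. `2t ≤ 2 artanh (1/R) = log ((R+1)/(R-1))`.
-/

open Complex ComplexConjugate Metric Set

namespace Complex

theorem normSq_cosh_sub_normSq_sinh (z : ℂ) :
    normSq (cosh z) - normSq (sinh z) = Real.cos (2 * z.im) := by
  have hconj : exp z * conj (exp (-z)) = exp ((2 * z.im : ℝ) * I) := by
    rw [← exp_conj, ← exp_add, map_neg, ← sub_eq_add_neg, sub_conj]
  have hnormSq_two : normSq 2 = 4 := by norm_num [normSq_apply]
  rw [cosh, sinh, normSq_div, normSq_div, normSq_add, normSq_sub, hconj, exp_ofReal_mul_I_re,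
    hnormSq_two]
  ring

theorem normSq_sinh_lt_normSq_cosh {z : ℂ} (h : |z.im| < Real.pi / 4) :
    normSq (sinh z) < normSq (cosh z) := by
  have hcos : 0 < Real.cos (2 * z.im) := by
    apply Real.cos_pos_of_mem_Ioo
    constructor <;> linarith [abs_lt.mp h]
  linarith [normSq_cosh_sub_normSq_sinh z]

theorem cosh_ne_zero_of_abs_im_lt {z : ℂ} (h : |z.im| < Real.pi / 4) : cosh z ≠ 0 := by
  intro h0
  have := normSq_sinh_lt_normSq_cosh h
  rw [h0, map_zero] at this
  exact (normSq_nonneg _).not_gt this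

theorem norm_tanh_lt_one_of_abs_im_lt {z : ℂ} (h : |z.im| < Real.pi / 4) : ‖tanh z‖ < 1 := by
  have hnorm : ‖sinh z‖ < ‖cosh z‖ := by
    rw [← sq_lt_sq₀ (norm_nonneg _) (norm_nonneg _), Complex.sq_norm, Complex.sq_norm]
    exact normSq_sinh_lt_normSq_cosh h
  rw [tanh_eq_sinh_div_cosh, norm_div, div_lt_one (norm_pos_iff.mpr (cosh_ne_zero_of_abs_im_lt h))]
  exact hnorm

theorem differentiableAt_tanh {z : ℂ} (h : cosh z ≠ 0) : DifferentiableAt ℂ tanh z := by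
  have : tanh = fun w ↦ sinh w / cosh w := funext tanh_eq_sinh_div_cosh
  rw [this]
  exact (differentiable_sinh z).div (differentiable_cosh z) h

end Complex

theorem DifferentiableOn.ctanh_of_abs_im_lt {f : ℂ → ℂ} {s : Set ℂ}
    (hf : DifferentiableOn ℂ f s) (him : ∀ z ∈ s, |(f z).im| < Real.pi / 4) :
    DifferentiableOn ℂ (fun z ↦ tanh (f z)) s := fun z hz ↦
  (differentiableAt_tanh (cosh_ne_zero_of_abs_im_lt (him z hz))).comp_differentiableWithinAt
    (g := tanh) z (hf z hz)

theorem Real.two_mul_le_log_of_tanh_le_inv {t R : ℝ} (hR : 1 < R) (h : Real.tanh t ≤ R⁻¹) :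
    2 * t ≤ Real.log ((R + 1) / (R - 1)) := by
  have hR0 : 0 < R := by linarith
  have hinv : R⁻¹ < 1 := inv_lt_one_of_one_lt₀ hR
  have hle : t ≤ artanh R⁻¹ := by
    simpa only [artanh_tanh] using artanh_le_artanh (neg_one_lt_tanh t) hinv h
  have hartanh : artanh R⁻¹ = 1 / 2 * log ((R + 1) / (R - 1)) := by
    rw [artanh_eq_half_log ⟨by linarith [inv_pos.mpr hR0], hinv.le⟩]
    congr 2
    field_simp
  linarith

theorem disk_to_strip_limitation_general (φ : ℂ → ℂ) (ρ R : ℝ)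
    (hρ0 : 0 < ρ) (hR : 1 < R)
    (hφ : DifferentiableOn ℂ φ (Metric.ball (0 : ℂ) R))
    (h0 : φ 0 = 0) (h1 : φ 1 = 1)
    (him : ∀ z ∈ Metric.ball (0 : ℂ) R, |(φ z).im| < ρ) :
    Real.pi / (2 * ρ) ≤ Real.log ((R + 1) / (R - 1)) := by
  set t : ℝ := Real.pi / (4 * ρ)
  set f : ℂ → ℂ := fun z ↦ tanh (t * φ z)
  have him_t : ∀ z ∈ ball (0 : ℂ) R, |((t : ℂ) * φ z).im| < Real.pi / 4 := by
    intro z hz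
    rw [im_ofReal_mul, abs_mul, abs_of_pos (by positivity)]
    calc t * |(φ z).im| < t * ρ := by gcongr; exact him z hz
      _ = Real.pi / 4 := by simp only [t]; field_simp
  have hf : DifferentiableOn ℂ f (ball 0 R) := (hφ.const_mul _).ctanh_of_abs_im_lt him_t
  have hf0 : f 0 = 0 := by simp [f, h0]
  have hmaps : MapsTo f (ball 0 R) (closedBall (f 0) 1) := fun z hz ↦ by
    rw [hf0, mem_closedBall, dist_zero_right]
    exact (norm_tanh_lt_one_of_abs_im_lt (him_t z hz)).le
  have hschwarz := dist_le_div_mul_dist_of_mapsTo_ball hf hmaps (z := 1) (by simpa using hR)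
  have htanh : Real.tanh t ≤ R⁻¹ := by
    simp only [f, h0, h1, mul_zero, mul_one, tanh_zero, dist_zero_right, ← ofReal_tanh,
      norm_real, Real.norm_eq_abs, norm_one, one_div] at hschwarz
    exact (le_abs_self _).trans hschwarz
  have := Real.two_mul_le_log_of_tanh_le_inv hR htanh
  calc Real.pi / (2 * ρ) = 2 * t := by simp only [t]; field_simp; ring
    _ ≤ _ := this

/-- Disk-to-strip limitation: if `φ` is holomorphic on the disk of radius `R > 1`,
normalized by `φ 0 = 0`, `φ 1 = 1`, and maps into the strip `|Im w| < ρ` with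
`ρ ∈ (0,1)`, then `π/(2ρ) ≤ log((R+1)/(R-1))`. -/
theorem disk_to_strip_limitation (φ : ℂ → ℂ) (ρ R : ℝ)
    (hρ0 : 0 < ρ) (hρ1 : ρ < 1) (hR : 1 < R)
    (hφ : DifferentiableOn ℂ φ (Metric.ball (0 : ℂ) R))
    (h0 : φ 0 = 0) (h1 : φ 1 = 1)
    (him : ∀ z ∈ Metric.ball (0 : ℂ) R, |(φ z).im| < ρ) :
    Real.pi / (2 * ρ) ≤ Real.log ((R + 1) / (R - 1)) :=
  disk_to_strip_limitation_general φ ρ R hρ0 hR hφ h0 h1 him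
end

section
/- Let g be holomorphic on the open disk of radius R > 1 with Re g(z) > 0 for all |z| < R, g(0) = 1, and |g(1)| = A for some A > 0. Then |log A| ≤ log((R+1)/(R−1)). -/
/-!
The Cayley transform `w = (g - 1) / (g + 1)` maps the right half-plane into the unit disk and
sends `g 0 = 1` to `0`, so the Schwarz lemma on the disk of radius `R` gives `‖w 1‖ ≤ 1 / R`.
Inverting, `g 1 = (1 + w 1) / (1 - w 1)`, and both `‖1 ± w 1‖` lie in `[1 - 1/R, 1 + 1/R]`,
which bounds `|log ‖g 1‖|` by `log ((1 + 1/R) / (1 - 1/R)) = log ((R + 1) / (R - 1))`.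
-/

open Complex Metric Set

lemma Complex.add_one_ne_zero_of_re_pos {z : ℂ} (hz : 0 < z.re) : z + 1 ≠ 0 := by
  intro h
  have := congrArg re h
  simp only [add_re, one_re, zero_re] at this
  linarith

lemma Complex.norm_sub_one_div_add_one_lt_one {z : ℂ} (hz : 0 < z.re) :
    ‖(z - 1) / (z + 1)‖ < 1 := by
  have hsq : ‖z - 1‖ ^ 2 < ‖z + 1‖ ^ 2 := by
    simp only [Complex.sq_norm, normSq_apply, sub_re, sub_im, add_re, add_im, one_re, one_im]
    nlinarith
  rw [norm_div, div_lt_one (norm_pos_iff.2 (add_one_ne_zero_of_re_pos hz))]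
  exact lt_of_pow_lt_pow_left₀ 2 (norm_nonneg _) hsq

lemma Complex.eq_one_add_div_one_sub_of_add_one_ne_zero {z : ℂ} (hz : z + 1 ≠ 0) :
    z = (1 + (z - 1) / (z + 1)) / (1 - (z - 1) / (z + 1)) := by
  field_simp
  ring

lemma Complex.abs_log_norm_one_add_div_one_sub_le {w : ℂ} {s : ℝ} (hw : ‖w‖ ≤ s) (hs : s < 1) :
    |Real.log ‖(1 + w) / (1 - w)‖| ≤ Real.log ((1 + s) / (1 - s)) := by
  have bounds (u : ℂ) (hu : ‖u‖ ≤ s) : 1 - s ≤ ‖1 + u‖ ∧ ‖1 + u‖ ≤ 1 + s := by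
    have lower := norm_sub_le (1 + u) u
    rw [add_sub_cancel_right, norm_one] at lower
    have upper := norm_add_le (1 : ℂ) u
    rw [norm_one] at upper
    constructor <;> linarith
  obtain ⟨hp_lo, hp_hi⟩ := bounds w hw
  obtain ⟨hm_lo, hm_hi⟩ := bounds (-w) (by rwa [norm_neg])
  rw [← sub_eq_add_neg] at hm_lo hm_hi
  have hs0 : 0 ≤ s := (norm_nonneg w).trans hw
  rw [norm_div, Real.log_div (by linarith) (by linarith),
    Real.log_div (by linarith) (by linarith), abs_sub_le_iff]
  constructor <;> gcongr <;> linarith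

theorem half_plane_growth_bound_general (g : ℂ → ℂ) (R A : ℝ) (hR : 1 < R)
    (hg : DifferentiableOn ℂ g (Metric.ball (0 : ℂ) R))
    (hre : ∀ z ∈ Metric.ball (0 : ℂ) R, 0 < (g z).re)
    (h0 : g 0 = 1) (h1 : ‖g 1‖ = A) :
    |Real.log A| ≤ Real.log ((R + 1) / (R - 1)) := by
  set w : ℂ → ℂ := fun z => (g z - 1) / (g z + 1) with hw
  have hg_add_one : ∀ z ∈ ball (0 : ℂ) R, g z + 1 ≠ 0 := fun z hz =>
    add_one_ne_zero_of_re_pos (hre z hz)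
  have hw_diff : DifferentiableOn ℂ w (ball 0 R) :=
    (hg.sub_const 1).div (hg.add_const 1) hg_add_one
  have hw0 : w 0 = 0 := by simp [hw, h0]
  have hw_maps : MapsTo w (ball 0 R) (closedBall (w 0) 1) := fun z hz => by
    rw [hw0, mem_closedBall_zero_iff]
    exact (norm_sub_one_div_add_one_lt_one (hre z hz)).le
  have h1_mem : (1 : ℂ) ∈ ball (0 : ℂ) R := by simpa using hR
  have hw1 : ‖w 1‖ ≤ 1 / R := by
    simpa [hw0] using dist_le_div_mul_dist_of_mapsTo_ball hw_diff hw_maps h1_mem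
  rw [← h1, eq_one_add_div_one_sub_of_add_one_ne_zero (hg_add_one 1 h1_mem)]
  refine (abs_log_norm_one_add_div_one_sub_le hw1 ((div_lt_one (by linarith)).2 hR)).trans_eq ?_
  have hR1 : R - 1 ≠ 0 := by linarith
  congr 1
  field_simp

/-- Integrated Schwarz–Pick bound: if `g` is holomorphic on the disk of radius `R > 1`,
maps into the right half-plane, `g 0 = 1` and `|g 1| = A > 0`, then
`|log A| ≤ log((R+1)/(R-1))`. -/
theorem half_plane_growth_bound (g : ℂ → ℂ) (R A : ℝ) (hR : 1 < R) (hA : 0 < A)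
    (hg : DifferentiableOn ℂ g (Metric.ball (0 : ℂ) R))
    (hre : ∀ z ∈ Metric.ball (0 : ℂ) R, 0 < (g z).re)
    (h0 : g 0 = 1) (h1 : ‖g 1‖ = A) :
    |Real.log A| ≤ Real.log ((R + 1) / (R - 1)) :=
  half_plane_growth_bound_general g R A hR hg hre h0 h1
end

section
/- Let ρ ∈ (0,1) and R > 1. Suppose φ is holomorphic on the open disk of radius R, satisfies φ(0) = 0 and φ(1) = 1, and its image avoids the two vertical rays i[ρ, ∞) and i(−∞, −ρ] (i.e., φ(D_R) ⊆ ℂ \ (i[ρ,∞) ∪ i(−∞,−ρ])). Then (1/2)·log(1 + ρ^{−2}) ≤ log((R+1)/(R−1)). -/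
/-!
Since `φ` omits `±i[ρ, ∞)`, the function `1 + (φ/ρ)²` omits `(-∞, 0]`, so its principal square
root `g` is holomorphic on `D_R` with positive real part, `g 0 = 1` and `g 1 = √(1 + ρ⁻²) =: s`.
The Cayley map `w ↦ (w - 1)/(w + 1)` sends the right half-plane into the unit disk, so the
Schwarz lemma on `D_R` gives `(s - 1)/(s + 1) ≤ 1/R`, i.e. `s ≤ (R + 1)/(R - 1)`; take logarithms.
-/

open Complex Metric

lemma Complex.one_add_sq_mem_slitPlane {u : ℂ} (hu : ∀ t : ℝ, 1 ≤ |t| → u ≠ I * t) :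
    1 + u ^ 2 ∈ slitPlane := by
  by_contra hmem
  simp only [mem_slitPlane_iff, not_or, not_lt, not_not, add_re, add_im, one_re, one_im, sq,
    mul_re, mul_im] at hmem
  obtain ⟨hre, him⟩ := hmem
  have hu_re : u.re = 0 := by
    by_contra hne
    have hu_im : u.im = 0 :=
      (mul_eq_zero.mp (show u.re * u.im = 0 by linarith)).resolve_left hne
    nlinarith
  refine hu u.im ?_ (Complex.ext (by simp [hu_re]) (by simp))
  exact (one_le_sq_iff_one_le_abs _).mp (by nlinarith)

lemma Complex.one_add_div_sq_mem_slitPlane {w : ℂ} {ρ : ℝ} (hρ : 0 < ρ)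
    (hw : ∀ b : ℝ, ρ ≤ |b| → w ≠ I * b) : 1 + (w / ρ) ^ 2 ∈ slitPlane := by
  refine one_add_sq_mem_slitPlane fun t ht hwt => hw (ρ * t) ?_ ?_
  · rw [abs_mul, abs_of_pos hρ]
    exact le_mul_of_one_le_right hρ.le ht
  · rw [div_eq_iff (ofReal_ne_zero.mpr hρ.ne')] at hwt
    rw [hwt]
    push_cast
    ring

lemma Complex.re_cpow_inv_two_pos {w : ℂ} (hw : w ∈ slitPlane) : 0 < (w ^ (2⁻¹ : ℂ)).re := by
  rw [cpow_inv_two_re, Real.sqrt_pos]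
  rcases mem_slitPlane_iff.mp hw with hre | him
  · linarith [abs_re_le_norm w, le_abs_self w.re]
  · linarith [abs_re_lt_norm.mpr him, neg_abs_le w.re]

lemma Complex.norm_sub_one_lt_norm_add_one {w : ℂ} (hw : 0 < w.re) : ‖w - 1‖ < ‖w + 1‖ := by
  rw [← sq_lt_sq₀ (norm_nonneg _) (norm_nonneg _), Complex.sq_norm, Complex.sq_norm,
    normSq_apply, normSq_apply]
  simp only [sub_re, sub_im, add_re, add_im, one_re, one_im]
  nlinarith

lemma Complex.norm_sub_one_div_add_one_le_of_re_pos {E : Type*} [NormedAddCommGroup E]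
    [NormedSpace ℂ E] {g : E → ℂ} {c z : E} {R : ℝ} (hg : DifferentiableOn ℂ g (ball c R))
    (hre : ∀ z ∈ ball c R, 0 < (g z).re) (hc : g c = 1) (hz : z ∈ ball c R) :
    ‖(g z - 1) / (g z + 1)‖ ≤ dist z c / R := by
  have hne : ∀ z ∈ ball c R, g z + 1 ≠ 0 := fun z hz h => by
    have := congrArg re h
    simp only [add_re, one_re, zero_re] at this
    linarith [hre z hz]
  have hmaps : Set.MapsTo (fun z => (g z - 1) / (g z + 1)) (ball c R) (closedBall 0 1) :=
    fun z hz => by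
      rw [mem_closedBall_zero_iff, norm_div, div_le_one (norm_pos_iff.mpr (hne z hz))]
      exact (norm_sub_one_lt_norm_add_one (hre z hz)).le
  have hdiff : DifferentiableOn ℂ (fun z => (g z - 1) / (g z + 1)) (ball c R) := by
    simpa only [div_eq_mul_inv] using (hg.sub_const 1).fun_mul ((hg.add_const 1).fun_inv hne)
  have := dist_le_div_mul_dist_of_mapsTo_ball hdiff (by simpa [hc] using hmaps) hz
  simpa [hc, div_eq_inv_mul] using this

lemma le_add_one_div_sub_one_of_sub_one_div_add_one_le {s R : ℝ} (hs : -1 < s) (hR : 1 < R)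
    (h : (s - 1) / (s + 1) ≤ 1 / R) : s ≤ (R + 1) / (R - 1) := by
  rw [div_le_div_iff₀ (by linarith) (by linarith)] at h
  rw [le_div_iff₀ (by linarith)]
  linarith

theorem wedge_mapping_optimality_general (φ : ℂ → ℂ) (ρ R : ℝ)
    (hρ0 : 0 < ρ) (hR : 1 < R)
    (hφ : DifferentiableOn ℂ φ (Metric.ball (0 : ℂ) R))
    (h0 : φ 0 = 0) (h1 : φ 1 = 1)
    (havoid : ∀ z ∈ Metric.ball (0 : ℂ) R, ∀ b : ℝ, ρ ≤ |b| → φ z ≠ Complex.I * b) :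
    (1 / 2) * Real.log (1 + 1 / ρ ^ 2) ≤ Real.log ((R + 1) / (R - 1)) := by
  have hslit : ∀ z ∈ ball (0 : ℂ) R, 1 + (φ z / ρ) ^ 2 ∈ slitPlane :=
    fun z hz => one_add_div_sq_mem_slitPlane hρ0 (havoid z hz)
  set g : ℂ → ℂ := fun z => (1 + (φ z / ρ) ^ 2) ^ (2⁻¹ : ℂ)
  have hg : DifferentiableOn ℂ g (ball 0 R) :=
    (((hφ.div_const _).pow 2).const_add 1).cpow (differentiableOn_const _) hslit
  set s := √(1 + 1 / ρ ^ 2)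
  have hs : -1 < s := neg_one_lt_zero.trans_le (Real.sqrt_nonneg _)
  have hg1 : g 1 = s := by
    have hs_sq : (1 + (1 / ρ) ^ 2 : ℂ) = (s : ℂ) ^ 2 := by
      rw [← ofReal_pow, Real.sq_sqrt (by positivity)]
      push_cast
      ring
    simp only [g, h1, hs_sq]
    exact sq_cpow_two_inv (by simpa using Real.sqrt_pos.mpr (by positivity))
  have hschwarz := norm_sub_one_div_add_one_le_of_re_pos hg
    (fun z hz => re_cpow_inv_two_pos (hslit z hz)) (by simp [g, h0])
    (z := 1) (mem_ball_zero_iff.mpr (by simpa using hR))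
  have hg1_cayley : (g 1 - 1) / (g 1 + 1) = ((s - 1) / (s + 1) : ℝ) := by
    rw [hg1]; push_cast; rfl
  rw [hg1_cayley, norm_real, Real.norm_eq_abs, dist_zero_right, norm_one] at hschwarz
  calc (1 / 2) * Real.log (1 + 1 / ρ ^ 2) = Real.log s := by
        rw [Real.log_sqrt (by positivity)]; ring
    _ ≤ Real.log ((R + 1) / (R - 1)) := Real.log_le_log (by positivity)
        (le_add_one_div_sub_one_of_sub_one_div_add_one_le hs hR ((le_abs_self _).trans hschwarz))

/-- Optimality of the wedge mapping: if `φ` is holomorphic on the disk of radius `R > 1`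
with `φ 0 = 0`, `φ 1 = 1`, and its image avoids the vertical rays `i[ρ,∞)` and
`i(-∞,-ρ]` with `ρ ∈ (0,1)`, then `(1/2) log(1 + ρ⁻²) ≤ log((R+1)/(R-1))`. -/
theorem wedge_mapping_optimality (φ : ℂ → ℂ) (ρ R : ℝ)
    (hρ0 : 0 < ρ) (hρ1 : ρ < 1) (hR : 1 < R)
    (hφ : DifferentiableOn ℂ φ (Metric.ball (0 : ℂ) R))
    (h0 : φ 0 = 0) (h1 : φ 1 = 1)
    (havoid : ∀ z ∈ Metric.ball (0 : ℂ) R, ∀ b : ℝ, ρ ≤ |b| → φ z ≠ Complex.I * b) :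
    (1 / 2) * Real.log (1 + 1 / ρ ^ 2) ≤ Real.log ((R + 1) / (R - 1)) :=
  wedge_mapping_optimality_general φ ρ R hρ0 hR hφ h0 h1 havoid
end

section
/- Let x, y, z ≥ 0 be real numbers with y ≤ max(x, z) (y is at most the larger of the other two). Then √(x² + y² + z²) ≤ (x + z) + (√2 − 1)·y. -/
/-- For nonnegative reals `x, y, z` with `y ≤ max x z` (so `y` is at most the larger of
the other two), `√(x² + y² + z²) ≤ (x + z) + (√2 - 1) y`. -/
theorem sqrt_sum_sq_le (x y z : ℝ) (hx : 0 ≤ x) (hy : 0 ≤ y) (hz : 0 ≤ z)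
    (h : y ≤ max x z) :
    Real.sqrt (x ^ 2 + y ^ 2 + z ^ 2) ≤ (x + z) + (Real.sqrt 2 - 1) * y := by
  have h2 : (1:ℝ) ≤ Real.sqrt 2 := by
    nlinarith [Real.sq_sqrt (by norm_num : (0:ℝ) ≤ 2), Real.sqrt_nonneg 2]
  have hsq : (Real.sqrt 2) ^ 2 = 2 := Real.sq_sqrt (by norm_num)
  have hxz : y ≤ x + z := le_trans h (max_le (by linarith) (by linarith))
  have hrhs : 0 ≤ (x + z) + (Real.sqrt 2 - 1) * y := by nlinarith
  have key : x ^ 2 + y ^ 2 + z ^ 2 ≤ ((x + z) + (Real.sqrt 2 - 1) * y) ^ 2 := by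
    nlinarith [mul_nonneg hx hz, mul_nonneg hy (sub_nonneg.mpr hxz)]
  calc Real.sqrt (x ^ 2 + y ^ 2 + z ^ 2)
      ≤ Real.sqrt (((x + z) + (Real.sqrt 2 - 1) * y) ^ 2) := Real.sqrt_le_sqrt key
    _ = (x + z) + (Real.sqrt 2 - 1) * y := Real.sqrt_sq hrhs
end

section
/- Let G be a finite graph with maximum degree at most Δ ≥ 2 and let u be a vertex. The number of connected vertex subsets S of G with u ∈ S and |S| = s is at most (1/s)·C(sΔ, s−1), where C denotes the binomial coefficient. -/
/-!
Label the neighbours of every vertex by `Fin Δ`. Explore a connected set `S ∋ u` of size `s`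
breadth-first from `u`: the `m`-th new vertex is attached to an earlier vertex `p` as its
neighbour with label `c`, and the key `(p, c)` taken is always the lexicographically least one
available. The `s - 1` keys form a set `A ⊆ Fin s × Fin Δ` from which `S` is recovered (sort `A`
and follow the keys), and `A` is a ballot set: for `0 < t < s` at least `t` keys have `p < t`.
By the cycle lemma, of the `s` cyclic shifts of the index `p` in a set of `s - 1` keys, at most
one gives a ballot set, so `s` times the number of ballot sets is at most `C(sΔ, s - 1)`.
-/

open Finset

theorem StrictMonoOn.eqOn_of_image_Iio_eq {α : Type*} [LinearOrder α] {f g : ℕ → α} {n : ℕ}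
    (hf : StrictMonoOn f (Set.Iio n)) (hg : StrictMonoOn g (Set.Iio n))
    (h : f '' Set.Iio n = g '' Set.Iio n) : Set.EqOn f g (Set.Iio n) := by
  have hrange : ∀ φ : ℕ → α, Set.range (fun i : Fin n => φ i) = φ '' Set.Iio n :=
    fun φ => by rw [← Fin.range_val, ← Set.range_comp]; rfl
  have hfg := (StrictMono.range_inj (f := fun i : Fin n => f i) (g := fun i : Fin n => g i)
    (fun i j hij => hf i.2 j.2 hij) (fun i j hij => hg i.2 j.2 hij)).1
    (by rw [hrange, hrange, h])
  exact fun i hi => congrFun hfg ⟨i, hi⟩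

namespace SimpleGraph

variable {V : Type*}

theorem exists_neighbor_labelling [Fintype V] (G : SimpleGraph V) [DecidableRel G.Adj] {Δ : ℕ}
    (hdeg : ∀ v, G.degree v ≤ Δ) :
    ∃ nbr : V → Fin Δ → V, ∀ v w, G.Adj v w → ∃ c, nbr v c = w := by
  refine ⟨fun v c => (G.neighborFinset v).toList.getD c v, fun v w hvw => ?_⟩
  have hw : w ∈ (G.neighborFinset v).toList := by simpa using hvw
  obtain ⟨i, hi, rfl⟩ := List.getElem_of_mem hw
  have hiΔ : i < Δ := hi.trans_le (by simpa using hdeg v)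
  exact ⟨⟨i, hiΔ⟩, List.getD_eq_getElem _ _ hi⟩

theorem Connected.exists_adj_of_induce {G : SimpleGraph V} {S E : Set V}
    (hS : (G.induce S).Connected) (hES : E ⊆ S) {x y : V} (hx : x ∈ E) (hy : y ∈ S)
    (hyE : y ∉ E) : ∃ a ∈ E, ∃ b ∈ S, b ∉ E ∧ G.Adj a b := by
  obtain ⟨p⟩ := hS.preconnected ⟨x, hES hx⟩ ⟨y, hy⟩
  obtain ⟨d, -, hd₁, hd₂⟩ := p.exists_boundary_dart {z | z.1 ∈ E} hx hyE
  exact ⟨_, hd₁, _, d.snd.2, hd₂, d.adj⟩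

end SimpleGraph

namespace ConnectedSets

variable {s : ℕ} {β : Type*}

def IsBallotCode (A : Finset (Fin s × β)) : Prop :=
  #A = s - 1 ∧ ∀ t : ℕ, 0 < t → t < s → t ≤ #{a ∈ A | (a.1 : ℕ) < t}

section CycleLemma

variable [NeZero s]

def rotate (r : Fin s) (A : Finset (Fin s × β)) : Finset (Fin s × β) :=
  A.map ((Equiv.addRight r).prodCongr (Equiv.refl β)).toEmbedding

lemma card_rotate (r : Fin s) (A : Finset (Fin s × β)) : #(rotate r A) = #A :=
  card_map _

lemma rotate_rotate (r r' : Fin s) (A : Finset (Fin s × β)) :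
    rotate r' (rotate r A) = rotate (r + r') A := by
  rw [rotate, rotate, map_map]
  congr 1
  ext a <;> simp [add_assoc]

lemma rotate_zero (A : Finset (Fin s × β)) : rotate 0 A = A := by
  rw [rotate]
  convert map_refl (s := A)
  ext a <;> simp

/-- Shifting by `r` moves below `r` exactly the keys whose index is at least `s - r`. -/
lemma card_filter_rotate_add (A : Finset (Fin s × β)) {r : Fin s} (hr : r ≠ 0) :
    #{a ∈ rotate r A | (a.1 : ℕ) < r} + #{a ∈ A | (a.1 : ℕ) < s - r} = #A := by
  have hr : 0 < (r : ℕ) := Fin.pos_iff_ne_zero.2 hr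
  set e := ((Equiv.addRight r).prodCongr (Equiv.refl β)).toEmbedding
  have wrap : ∀ a : Fin s × β, ((e a).1 : ℕ) < r ↔ ¬ (a.1 : ℕ) < s - r := fun a => by
    have := a.1.2
    simp only [e, Equiv.coe_toEmbedding, Equiv.prodCongr_apply, Prod.map_fst,
      Equiv.coe_addRight, Fin.val_add_eq_ite]
    split_ifs <;> omega
  rw [rotate, filter_map, card_map,
    filter_congr (p := (fun a : Fin s × β => (a.1 : ℕ) < r) ∘ e) fun a _ => wrap a, add_comm]
  exact card_filter_add_card_filter_not _

lemma not_isBallotCode_rotate {A : Finset (Fin s × β)} (hA : IsBallotCode A) {r : Fin s}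
    (hr : r ≠ 0) : ¬ IsBallotCode (rotate r A) := by
  intro hrot
  have hr' : 0 < (r : ℕ) := Fin.pos_iff_ne_zero.2 hr
  have hsum := card_filter_rotate_add A hr
  have hlow := hrot.2 r hr' r.2
  have hhigh := hA.2 (s - r) (by omega) (by omega)
  have hcard := hA.1
  omega

theorem card_mul_card_ballotCode_le [Fintype β] :
    s * Nat.card {A : Finset (Fin s × β) // IsBallotCode A} ≤
      (s * Fintype.card β).choose (s - 1) := by
  classical
  let f : Fin s × {A : Finset (Fin s × β) // IsBallotCode A} →
      {B : Finset (Fin s × β) // #B = s - 1} :=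
    fun p => ⟨rotate p.1 p.2.1, (card_rotate _ _).trans p.2.2.1⟩
  have hf : Function.Injective f := by
    rintro ⟨r, A, hA⟩ ⟨r', A', hA'⟩ h
    have h : rotate r A = rotate r' A' := congrArg Subtype.val h
    have hA'_eq : rotate (r - r') A = A' := by
      rw [sub_eq_add_neg, ← rotate_rotate, h, rotate_rotate, add_neg_cancel, rotate_zero]
    obtain rfl : r = r' := by
      by_contra hne
      exact not_isBallotCode_rotate hA (sub_ne_zero.2 hne) (hA'_eq ▸ hA')
    obtain rfl : A = A' := by simpa [rotate_zero] using hA'_eq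
    rfl
  simpa [Nat.card_eq_fintype_card, Fintype.card_finset_len] using
    Nat.card_le_card_of_injective f hf

end CycleLemma

variable {V : Type*} {Δ : ℕ} (nbr : V → Fin Δ → V) (u : V)

structure IsTreeCoding (n : ℕ) (v : ℕ → V) (k : ℕ → Fin s × Fin Δ) : Prop where
  zero : v 0 = u
  parent_le : ∀ m < n, ((k m).1 : ℕ) ≤ m
  nbr_parent : ∀ m < n, nbr (v (k m).1) (k m).2 = v (m + 1)
  strictMonoOn : StrictMonoOn (fun m => toLex (k m)) (Set.Iio n)

namespace IsTreeCoding

variable {nbr u} {n : ℕ} {v v' : ℕ → V} {k k' : ℕ → Fin s × Fin Δ}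

theorem eqOn_of_image_eq (h : IsTreeCoding nbr u n v k) (h' : IsTreeCoding nbr u n v' k')
    (hkk' : (range n).image k = (range n).image k') : Set.EqOn v v' (Set.Iic n) := by
  have hkk' : k '' Set.Iio n = k' '' Set.Iio n := by
    simpa using congrArg (fun A : Finset (Fin s × Fin Δ) => (A : Set (Fin s × Fin Δ))) hkk'
  have hk : Set.EqOn k k' (Set.Iio n) := fun m hm =>
    toLex.injective <| h.strictMonoOn.eqOn_of_image_Iio_eq h'.strictMonoOn
      (by rw [← Set.image_image toLex k, ← Set.image_image toLex k', hkk']) hm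
  intro i hi
  induction i using Nat.strong_induction_on with
  | _ i ih =>
    cases i with
    | zero => rw [h.zero, h'.zero]
    | succ m =>
      have hm : m < n := hi
      have hp : ((k m).1 : ℕ) ≤ m := h.parent_le m hm
      rw [← h.nbr_parent m hm, ← h'.nbr_parent m hm, ← hk hm,
        ih _ (by omega) (show ((k m).1 : ℕ) ≤ n by omega)]

theorem isBallotCode (h : IsTreeCoding nbr u (s - 1) v k) :
    IsBallotCode ((range (s - 1)).image k) := by
  have hinj : Set.InjOn k (Set.Iio (s - 1)) := fun i hi j hj hij =>
    h.strictMonoOn.injOn hi hj (congrArg toLex hij)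
  have hcard : ∀ t ≤ s - 1, #((range t).image k) = t := fun t ht => by
    rw [card_image_of_injOn (hinj.mono (by simpa using Set.Iio_subset_Iio ht)), card_range]
  refine ⟨hcard _ le_rfl, fun t ht0 hts => ?_⟩
  calc t = #((range t).image k) := (hcard t (by omega)).symm
    _ ≤ _ := card_le_card fun a ha => by
        obtain ⟨m, hm, rfl⟩ := mem_image.1 ha
        rw [mem_range] at hm
        exact mem_filter.2 ⟨mem_image_of_mem k (mem_range.2 (by omega)),
          (h.parent_le m (by omega)).trans_lt hm⟩

end IsTreeCoding

def IsFrontierKey (S : Finset V) (n : ℕ) (v : ℕ → V) (q : Fin s × Fin Δ) : Prop :=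
  (q.1 : ℕ) ≤ n ∧ nbr (v q.1) q.2 ∈ S ∧ nbr (v q.1) q.2 ∉ v '' Set.Iic n

/-- The last field makes the exploration breadth-first: every key is the least frontier key at
the time it is taken. -/
structure IsGreedyExploration (S : Finset V) (n : ℕ) (v : ℕ → V)
    (k : ℕ → Fin s × Fin Δ) : Prop extends IsTreeCoding nbr u n v k where
  mem : ∀ i ≤ n, v i ∈ S
  injOn : Set.InjOn v (Set.Iic n)
  lt_of_isFrontierKey : ∀ m < n, ∀ q, IsFrontierKey nbr S n v q → toLex (k m) < toLex q

variable {nbr u} {S : Finset V} {n : ℕ} {v : ℕ → V} {k : ℕ → Fin s × Fin Δ}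

theorem isGreedyExploration_zero (hu : u ∈ S) (k : ℕ → Fin s × Fin Δ) :
    IsGreedyExploration nbr u S 0 (fun _ => u) k where
  zero := rfl
  parent_le := by simp
  nbr_parent := by simp
  strictMonoOn i hi := absurd hi i.not_lt_zero
  mem _ _ := hu
  injOn i hi j hj _ := (Nat.le_zero.1 hi).trans (Nat.le_zero.1 hj).symm
  lt_of_isFrontierKey := by simp

theorem IsFrontierKey.lt_of_update {q q' : Fin s × Fin Δ} (hq : IsFrontierKey nbr S n v q)
    (hmin : ∀ q', IsFrontierKey nbr S n v q' → toLex q ≤ toLex q')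
    (hq' : IsFrontierKey nbr S (n + 1) (Function.update v (n + 1) (nbr (v q.1) q.2)) q') :
    toLex q < toLex q' := by
  obtain ⟨hq'n, hq'S, hq'E⟩ := hq'
  rcases (show (q'.1 : ℕ) ≤ n + 1 from hq'n).lt_or_eq with hlt | heq
  · have hv : ∀ i ≤ n, Function.update v (n + 1) (nbr (v q.1) q.2) i = v i :=
      fun i hi => Function.update_of_ne (by omega) _ _
    rw [hv _ (by omega)] at hq'S hq'E
    have hq'front : IsFrontierKey nbr S n v q' := by
      refine ⟨by omega, hq'S, fun ⟨i, hi, hvi⟩ => hq'E ⟨i, Nat.le_succ_of_le hi, ?_⟩⟩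
      rw [hv i hi, hvi]
    refine (hmin q' hq'front).lt_of_ne fun hqq' => hq'E ⟨n + 1, Set.mem_Iic.2 le_rfl, ?_⟩
    rw [Function.update_self, toLex.injective hqq']
  · exact Prod.Lex.toLex_lt_toLex.2 (Or.inl (by rw [Fin.lt_def]; have := hq.1; omega))

namespace IsGreedyExploration

theorem extend (h : IsGreedyExploration nbr u S n v k) {q : Fin s × Fin Δ}
    (hq : IsFrontierKey nbr S n v q)
    (hmin : ∀ q', IsFrontierKey nbr S n v q' → toLex q ≤ toLex q') :
    IsGreedyExploration nbr u S (n + 1) (Function.update v (n + 1) (nbr (v q.1) q.2))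
      (Function.update k n q) := by
  have hv : ∀ i ≤ n, Function.update v (n + 1) (nbr (v q.1) q.2) i = v i :=
    fun i hi => Function.update_of_ne (by omega) _ _
  have hk : ∀ m < n, Function.update k n q m = k m :=
    fun m hm => Function.update_of_ne (by omega) _ _
  have hkq : ∀ m < n + 1, toLex (Function.update k n q m) ≤ toLex q := fun m hm => by
    rcases Nat.lt_succ_iff_lt_or_eq.1 hm with hm | rfl
    · rw [hk m hm]; exact (h.lt_of_isFrontierKey m hm q hq).le
    · rw [Function.update_self]
  have hparent : ∀ m < n + 1, ((Function.update k n q m).1 : ℕ) ≤ m := fun m hm => by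
    rcases Nat.lt_succ_iff_lt_or_eq.1 hm with hm | rfl
    · rw [hk m hm]; exact h.parent_le m hm
    · rw [Function.update_self]; exact hq.1
  refine ⟨⟨(hv 0 n.zero_le).trans h.zero, hparent, fun m hm => ?_, ?_⟩, ?_, ?_,
    fun m hm q' hq' => (hkq m hm).trans_lt (hq.lt_of_update hmin hq')⟩
  · rw [hv _ (by have := hparent m hm; omega)]
    rcases Nat.lt_succ_iff_lt_or_eq.1 hm with hm | rfl
    · rw [hk m hm, hv _ hm, h.nbr_parent m hm]
    · rw [Function.update_self, Function.update_self]
  · intro i hi j hj hij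
    show toLex _ < toLex _
    rcases Nat.lt_succ_iff_lt_or_eq.1 hj with hj | rfl
    · rw [hk i (hij.trans hj), hk j hj]; exact h.strictMonoOn (hij.trans hj) hj hij
    · rw [hk i hij, Function.update_self]; exact h.lt_of_isFrontierKey i hij q hq
  · intro i hi
    rcases Nat.le_add_one_iff.1 hi with hi | rfl
    · rw [hv i hi]; exact h.mem i hi
    · rw [Function.update_self]; exact hq.2.1
  · intro i hi j hj hij
    rcases Nat.le_add_one_iff.1 hi, Nat.le_add_one_iff.1 hj with ⟨hi | rfl, hj | rfl⟩
    · rw [hv i hi, hv j hj] at hij; exact h.injOn hi hj hij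
    · rw [hv i hi, Function.update_self] at hij; exact absurd ⟨i, hi, hij⟩ hq.2.2
    · rw [hv j hj, Function.update_self] at hij; exact absurd ⟨j, hj, hij.symm⟩ hq.2.2
    · rfl

theorem exists_isFrontierKey {G : SimpleGraph V} (h : IsGreedyExploration nbr u S n v k)
    (hnbr : ∀ x y, G.Adj x y → ∃ c, nbr x c = y) (hconn : (G.induce (S : Set V)).Connected)
    (hns : n < s) (hnS : n + 1 < #S) : ∃ q : Fin s × Fin Δ, IsFrontierKey nbr S n v q := by
  classical
  have hES : v '' Set.Iic n ⊆ S := Set.image_subset_iff.2 h.mem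
  have hSE : ¬ (S : Set V) ⊆ v '' Set.Iic n := fun hSE => by
    have hsub : S ⊆ (Finset.Iic n).image v := fun x hx => by simpa using hSE hx
    have := (card_le_card hsub).trans card_image_le
    rw [Nat.card_Iic] at this
    omega
  obtain ⟨y, hyS, hyE⟩ := Set.not_subset.1 hSE
  obtain ⟨-, ⟨p, hp, rfl⟩, w, hwS, hwE, hadj⟩ :=
    hconn.exists_adj_of_induce hES ⟨0, Set.mem_Iic.2 n.zero_le, h.zero⟩ hyS hyE
  obtain ⟨c, rfl⟩ := hnbr _ _ hadj
  exact ⟨(⟨p, by have : p ≤ n := hp; omega⟩, c), hp, hwS, hwE⟩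

theorem image_Iic_eq (h : IsGreedyExploration nbr u S n v k) (hS : #S = n + 1) :
    v '' Set.Iic n = S := by
  classical
  have himage := eq_of_subset_of_card_le (s := (Finset.Iic n).image v) (t := S)
    (image_subset_iff.2 fun i hi => h.mem i (mem_Iic.1 hi))
    (by rw [card_image_of_injOn (by simpa using h.injOn), Nat.card_Iic, hS])
  simpa using congrArg (fun A : Finset V => (A : Set V)) himage

end IsGreedyExploration

theorem exists_isGreedyExploration [NeZero s] [NeZero Δ] {G : SimpleGraph V}
    (hnbr : ∀ x y, G.Adj x y → ∃ c, nbr x c = y) (hconn : (G.induce (S : Set V)).Connected)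
    (hu : u ∈ S) (hS : #S = s) :
    ∀ n < s, ∃ v, ∃ k : ℕ → Fin s × Fin Δ, IsGreedyExploration nbr u S n v k := by
  intro n hn
  induction n with
  | zero => exact ⟨_, fun _ => 0, isGreedyExploration_zero hu _⟩
  | succ n ih =>
    classical
    obtain ⟨v, k, h⟩ := ih (by omega)
    obtain ⟨q₀, hq₀⟩ := h.exists_isFrontierKey hnbr hconn (by omega) (by omega)
    obtain ⟨q, hq, hmin⟩ := ({q | IsFrontierKey nbr S n v q} : Finset _).exists_min_image toLex
      ⟨q₀, by simpa using hq₀⟩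
    exact ⟨_, _, h.extend (by simpa using hq) fun q' hq' => hmin q' (by simpa using hq')⟩

variable (nbr u)

theorem card_connected_le_card_ballotCode [NeZero s] [NeZero Δ] {G : SimpleGraph V}
    (hnbr : ∀ x y, G.Adj x y → ∃ c, nbr x c = y) :
    Nat.card {S : Finset V // u ∈ S ∧ #S = s ∧ (G.induce (S : Set V)).Connected} ≤
      Nat.card {A : Finset (Fin s × Fin Δ) // IsBallotCode A} := by
  classical
  have hcode : ∀ S : {S : Finset V // u ∈ S ∧ #S = s ∧ (G.induce (S : Set V)).Connected},
      ∃ v, ∃ k : ℕ → Fin s × Fin Δ, IsTreeCoding nbr u (s - 1) v k ∧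
        v '' Set.Iic (s - 1) = S := by
    rintro ⟨S, hu, hS, hconn⟩
    obtain ⟨v, k, h⟩ := exists_isGreedyExploration hnbr hconn hu hS (s - 1)
      (Nat.sub_one_lt (NeZero.ne s))
    exact ⟨v, k, h.toIsTreeCoding, h.image_Iic_eq (by have := NeZero.ne s; omega)⟩
  choose v k hk hv using hcode
  refine Nat.card_le_card_of_injective
    (fun S => ⟨(range (s - 1)).image (k S), (hk S).isBallotCode⟩)
    fun S S' hSS' => Subtype.ext (coe_injective ?_)
  rw [← hv, ← hv, ((hk S).eqOn_of_image_eq (hk S') (congrArg Subtype.val hSS')).image_eq]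

end ConnectedSets

/-- Connected-set counting: in a finite graph with maximum degree at most `Δ ≥ 2`, the
number of connected vertex subsets `S` with `u ∈ S` and `|S| = s` is at most
`(1/s) C(sΔ, s-1)`. -/
theorem connected_set_count {V : Type*} [Fintype V] (G : SimpleGraph V)
    [DecidableRel G.Adj] (Δ : ℕ) (hΔ : 2 ≤ Δ) (hdeg : ∀ v, G.degree v ≤ Δ)
    (u : V) (s : ℕ) :
    (Nat.card {S : Finset V // u ∈ S ∧ S.card = s ∧
        (G.induce (↑S : Set V)).Connected} : ℝ) ≤
      (1 / (s : ℝ)) * ((s * Δ).choose (s - 1) : ℝ) := by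
  rcases Nat.eq_zero_or_pos s with rfl | hs
  · have : IsEmpty
        {S : Finset V // u ∈ S ∧ S.card = 0 ∧ (G.induce (↑S : Set V)).Connected} :=
      ⟨fun ⟨S, hu, hS, _⟩ => by simp_all⟩
    rw [Nat.card_of_isEmpty]
    simp
  have : NeZero s := ⟨hs.ne'⟩
  have : NeZero Δ := ⟨by omega⟩
  obtain ⟨nbr, hnbr⟩ := G.exists_neighbor_labelling hdeg
  have hcycle := ConnectedSets.card_mul_card_ballotCode_le (s := s) (β := Fin Δ)
  rw [Fintype.card_fin] at hcycle
  have hcount := (Nat.mul_le_mul_left s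
    (ConnectedSets.card_connected_le_card_ballotCode nbr u hnbr)).trans hcycle
  rw [one_div, inv_mul_eq_div, le_div_iff₀ (by exact_mod_cast hs)]
  exact_mod_cast (Nat.mul_comm _ _).trans_le hcount
end

section
/- If c is a complex number with c = x + iy (x = Re c, y = Im c), y ≠ 0, and tan(c) = −1/c, then x = 0. Equivalently, every solution of 1 + (c/2)·tan(c/2) = 0 is purely real or purely imaginary. -/
open Complex in
lemma tan_key_aux (c : ℂ) (h : c * Complex.sin c = -Complex.cos c) :
    2 * c.re * Complex.normSq (Complex.sin c) = -Real.sin (2 * c.re) ∧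
    2 * c.im * Complex.normSq (Complex.sin c) = Real.sinh (2 * c.im) := by
  have hconj : Complex.sin (starRingEnd ℂ c) = starRingEnd ℂ (Complex.sin c) :=
    (Complex.sin_conj c)
  have hprod : 2 * Complex.cos c * Complex.sin (starRingEnd ℂ c)
      = Complex.sin (c + starRingEnd ℂ c) - Complex.sin (c - starRingEnd ℂ c) := by
    rw [Complex.sin_add, Complex.sin_sub]; ring
  have hadd : c + starRingEnd ℂ c = (2 * c.re : ℝ) := by
    rw [Complex.add_conj]
  have hsub : c - starRingEnd ℂ c = (2 * c.im : ℝ) * Complex.I := by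
    rw [Complex.sub_conj]
  set a := Real.sin (2 * c.re) with ha
  set b := Real.sinh (2 * c.im) with hb
  have hmain : 2 * c * ((Complex.normSq (Complex.sin c) : ℝ) : ℂ)
      = -(a : ℂ) + (b : ℂ) * Complex.I := by
    have h1 : 2 * c * ((Complex.normSq (Complex.sin c) : ℝ) : ℂ)
        = 2 * (c * Complex.sin c) * starRingEnd ℂ (Complex.sin c) := by
      rw [← Complex.mul_conj]; ring
    rw [h1, h, ← hconj]
    have : 2 * -Complex.cos c * Complex.sin (starRingEnd ℂ c)
        = -(Complex.sin (c + starRingEnd ℂ c) - Complex.sin (c - starRingEnd ℂ c)) := by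
      rw [← hprod]; ring
    rw [this, hadd, hsub, Complex.sin_mul_I, ← Complex.ofReal_sin, ← Complex.ofReal_sinh,
      ← ha, ← hb]
    ring
  constructor
  · have := congrArg Complex.re hmain
    simpa using this
  · have := congrArg Complex.im hmain
    simpa using this

/-- Solutions of `tan c = -1/c` with `Im c ≠ 0` have `Re c = 0`; equivalently, every
solution of `1 + (c/2) tan(c/2) = 0` is purely real or purely imaginary. -/
theorem tan_eq_neg_inv_pure :
    (∀ c : ℂ, c.im ≠ 0 → Complex.tan c = -1 / c → c.re = 0) ∧
    (∀ c : ℂ, 1 + (c / 2) * Complex.tan (c / 2) = 0 → c.re = 0 ∨ c.im = 0) := by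
  have main : ∀ c : ℂ, c.im ≠ 0 → Complex.tan c = -1 / c → c.re = 0 := by
    intro c him htan
    have hc0 : c ≠ 0 := fun h => him (by simp [h])
    have hcos : Complex.cos c ≠ 0 := by
      intro h
      rw [Complex.tan_eq_sin_div_cos, h, div_zero] at htan
      have : (-1 : ℂ) / c ≠ 0 := by
        simp [div_eq_zero_iff, hc0]
      exact this htan.symm
    have heq : c * Complex.sin c = -Complex.cos c := by
      rw [Complex.tan_eq_sin_div_cos] at htan
      field_simp at htan
      linear_combination htan
    have hsin : Complex.sin c ≠ 0 := by
      intro h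
      rw [h, mul_zero] at heq
      exact hcos (by linear_combination heq)
    obtain ⟨hre, him'⟩ := tan_key_aux c heq
    set S := Complex.normSq (Complex.sin c) with hS
    set x := c.re
    set y := c.im
    -- S > 1 from the imaginary part
    have hS1 : 1 < S := by
      rcases lt_or_gt_of_ne him with hy | hy
      · have h1 : Real.sinh (2 * y) < 2 * y := by
          have := Real.self_lt_sinh_iff.mpr (by linarith : (0:ℝ) < 2 * (-y))
          have h2 : Real.sinh (2 * (-y)) = -Real.sinh (2 * y) := by
            rw [show 2 * (-y) = -(2*y) by ring, Real.sinh_neg]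
          nlinarith [this, h2]
        nlinarith
      · have h1 : 2 * y < Real.sinh (2 * y) :=
          Real.self_lt_sinh_iff.mpr (by linarith)
        nlinarith
    -- conclude x = 0
    by_contra hx
    have hSpos : 0 < S := lt_trans one_pos hS1
    have h2 : |2 * x * S| = |Real.sin (2 * x)| := by rw [hre, abs_neg]
    have h2' : |2 * x * S| = |2 * x| * S := by rw [abs_mul, abs_of_pos hSpos]
    have h3 : |Real.sin (2 * x)| ≤ |2 * x| := Real.abs_sin_le_abs
    have h4 : 0 < |2 * x| := abs_pos.mpr (by simpa using hx)
    nlinarith [h2, h2', h3, h4, hS1]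
  refine ⟨main, ?_⟩
  intro c hc
  set d := c / 2 with hd
  by_cases him : d.im = 0
  · right
    have : c.im = 2 * d.im := by simp [hd]; ring
    rw [this, him]; ring
  · left
    have hd0 : d ≠ 0 := by
      intro h; rw [h] at hc; simp at hc
    have htan : Complex.tan d = -1 / d := by
      field_simp
      linear_combination hc
    have := main d him htan
    have hcre : c.re = 2 * d.re := by simp [hd]; ring
    rw [hcre, this]; ring
end

section
/- Suppose ‖ad_H^r(B)‖ ≤ c₀^r · r! for all r ≥ 0 with c₀ > 0. Then for any complex s = a + ib with |b| < 1/c₀, the analytically continued Heisenberg evolution B(s) = Σ_{r≥0} (is)^r/r! · ad_H^r(B) converges with ‖B(ib)‖ ≤ 1/(1 − c₀|b|), and hence ‖e^{iHa} B(ib) e^{−iHa}‖ ≤ 1/(1 − c₀|b|) when H is Hermitian and a is real. -/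
/-!
The bound `‖ad_H^r B‖ ≤ c₀^r r!` cancels the `1/r!` of the series, leaving the geometric
majorant `(c₀|b|)^r`. Since `(ia)H` is skew-adjoint, `e^{iaH}` is unitary with inverse
`e^{-iaH}`, and multiplying by unitaries preserves the norm of a C*-algebra.
-/

open scoped Matrix.Norms.L2Operator Nat

section FactorialGrowth

variable {𝕜 E : Type*} [RCLike 𝕜] [NormedAddCommGroup E] [NormedSpace 𝕜 E]
  {f : ℕ → E} {C : ℝ}

theorem norm_pow_div_factorial_smul_le (hf : ∀ r, ‖f r‖ ≤ C ^ r * r !) (z : 𝕜) (r : ℕ) :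
    ‖(z ^ r / r ! : 𝕜) • f r‖ ≤ (C * ‖z‖) ^ r := by
  have hfac : (0 : ℝ) < r ! := mod_cast r.factorial_pos
  calc ‖(z ^ r / r ! : 𝕜) • f r‖ = ‖z‖ ^ r / r ! * ‖f r‖ := by
        rw [norm_smul, norm_div, norm_pow, RCLike.norm_natCast]
    _ ≤ ‖z‖ ^ r / r ! * (C ^ r * r !) := by gcongr; exact hf r
    _ = (C * ‖z‖) ^ r := by field_simp; ring

theorem summable_pow_div_factorial_smul [CompleteSpace E] (hf : ∀ r, ‖f r‖ ≤ C ^ r * r !)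
    (hC : 0 ≤ C) {z : 𝕜} (hz : C * ‖z‖ < 1) :
    Summable fun r => (z ^ r / r ! : 𝕜) • f r :=
  .of_norm_bounded (summable_geometric_of_lt_one (by positivity) hz)
    (norm_pow_div_factorial_smul_le hf z)

theorem norm_tsum_pow_div_factorial_smul_le (hf : ∀ r, ‖f r‖ ≤ C ^ r * r !)
    (hC : 0 ≤ C) {z : 𝕜} (hz : C * ‖z‖ < 1) :
    ‖∑' r, (z ^ r / r ! : 𝕜) • f r‖ ≤ 1 / (1 - C * ‖z‖) := by
  rw [one_div, ← tsum_geometric_of_lt_one (by positivity) hz]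
  exact tsum_of_norm_bounded (summable_geometric_of_lt_one (by positivity) hz).hasSum
    (norm_pow_div_factorial_smul_le hf z)

end FactorialGrowth

theorem norm_exp_mul_mul_exp_neg_of_mem_skewAdjoint {A : Type*} [NormedRing A]
    [NormedAlgebra ℂ A] [StarRing A] [CStarRing A] [ContinuousStar A] [CompleteSpace A]
    {x : A} (hx : x ∈ skewAdjoint A) (y : A) :
    ‖NormedSpace.exp x * y * NormedSpace.exp (-x)‖ = ‖y‖ := by
  let +nondep : NormedAlgebra ℚ A := .restrictScalars ℚ ℂ A
  have hU : NormedSpace.exp x ∈ unitary A := NormedSpace.exp_mem_unitary_of_mem_skewAdjoint hx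
  have hstar : NormedSpace.exp (-x) = star (NormedSpace.exp x) := by
    rw [NormedSpace.star_exp, skewAdjoint.mem_iff.mp hx]
  rw [hstar, CStarRing.norm_mul_mem_unitary _ (Unitary.star_mem hU),
    CStarRing.norm_mem_unitary_mul _ hU]

theorem heisenberg_series_bound_general (N : ℕ)
    (H B : Matrix (Fin N) (Fin N) ℂ) (hH : H.IsHermitian)
    (c₀ : ℝ)
    (had : ∀ r : ℕ, ‖(fun X => H * X - X * H)^[r] B‖ ≤ c₀ ^ r * (r.factorial : ℝ))
    (a b : ℝ) (hb : |b| < 1 / c₀) :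
    Summable (fun r : ℕ =>
      ((Complex.I * (Complex.I * (b : ℂ))) ^ r / (r.factorial : ℂ)) •
        (fun X => H * X - X * H)^[r] B) ∧
    ‖∑' r : ℕ, ((Complex.I * (Complex.I * (b : ℂ))) ^ r / (r.factorial : ℂ)) •
        (fun X => H * X - X * H)^[r] B‖ ≤ 1 / (1 - c₀ * |b|) ∧
    ‖NormedSpace.exp ((Complex.I * (a : ℂ)) • H) *
        (∑' r : ℕ, ((Complex.I * (Complex.I * (b : ℂ))) ^ r / (r.factorial : ℂ)) •
          (fun X => H * X - X * H)^[r] B) *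
        NormedSpace.exp (-((Complex.I * (a : ℂ)) • H))‖ ≤ 1 / (1 - c₀ * |b|) := by
  have hc₀ : 0 < c₀ := one_div_pos.mp ((abs_nonneg b).trans_lt hb)
  have hnorm : ‖Complex.I * (Complex.I * (b : ℂ))‖ = |b| := by simp
  have hz : c₀ * ‖Complex.I * (Complex.I * (b : ℂ))‖ < 1 := by
    rw [hnorm, mul_comm]
    exact (lt_div_iff₀ hc₀).mp hb
  have hsum := norm_tsum_pow_div_factorial_smul_le had hc₀.le hz
  rw [hnorm] at hsum
  have hskew : (Complex.I * (a : ℂ)) • H ∈ skewAdjoint (Matrix (Fin N) (Fin N) ℂ) :=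
    hH.isSelfAdjoint.smul_mem_skewAdjoint (by simp [skewAdjoint.mem_iff])
  refine ⟨summable_pow_div_factorial_smul had hc₀.le hz, hsum, ?_⟩
  rwa [norm_exp_mul_mul_exp_neg_of_mem_skewAdjoint hskew]

/-- Convergence of analytically continued Heisenberg evolution: if
`‖ad_H^r(B)‖ ≤ c₀^r r!` for all `r`, then for `s = a + ib` with `|b| < 1/c₀` the
series `B(ib) = Σ_r (i·(ib))^r/r! · ad_H^r(B)` converges with
`‖B(ib)‖ ≤ 1/(1 - c₀|b|)`, and for Hermitian `H` and real `a`, conjugating by the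
unitary `e^{iHa}` preserves the bound:
`‖e^{iHa} B(ib) e^{-iHa}‖ ≤ 1/(1 - c₀|b|)`. -/
theorem heisenberg_series_bound (N : ℕ)
    (H B : Matrix (Fin N) (Fin N) ℂ) (hH : H.IsHermitian) (hB : ‖B‖ ≤ 1)
    (c₀ : ℝ) (hc₀ : 0 < c₀)
    (had : ∀ r : ℕ, ‖(fun X => H * X - X * H)^[r] B‖ ≤ c₀ ^ r * (r.factorial : ℝ))
    (a b : ℝ) (hb : |b| < 1 / c₀) :
    Summable (fun r : ℕ =>
      ((Complex.I * (Complex.I * (b : ℂ))) ^ r / (r.factorial : ℂ)) •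
        (fun X => H * X - X * H)^[r] B) ∧
    ‖∑' r : ℕ, ((Complex.I * (Complex.I * (b : ℂ))) ^ r / (r.factorial : ℂ)) •
        (fun X => H * X - X * H)^[r] B‖ ≤ 1 / (1 - c₀ * |b|) ∧
    ‖NormedSpace.exp ((Complex.I * (a : ℂ)) • H) *
        (∑' r : ℕ, ((Complex.I * (Complex.I * (b : ℂ))) ^ r / (r.factorial : ℂ)) •
          (fun X => H * X - X * H)^[r] B) *
        NormedSpace.exp (-((Complex.I * (a : ℂ)) • H))‖ ≤ 1 / (1 - c₀ * |b|) :=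
  heisenberg_series_bound_general N H B hH c₀ had a b hb
end
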